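/- arXiv:1305.2744 — 3 statements merged into one kernel-verified Lean document; each statement's English description precedes it below -/
import Mathlib

section
/- Every trace μ ∈ M(E,I) admits a Foata normal form: a factorization μ = F₁F₂…F_h where each F_k is a product of pairwise-independent distinct letters (written in a fixed total order on E), and for each k and each letter a in F_{k+1} there exists a letter b in F_k with (a,b) ∉ I. -/
/-- One elementary transposition of adjacent independent letters. -/
def TraceStep {E : Type} (I : E → E → Prop) (w₁ w₂ : List E) : Prop :=
  ∃ u v a b, I a b ∧ w₁ = u ++ a :: b :: v ∧ w₂ = u ++ b :: a :: v

/-- Trace equivalence: the equivalence relation generated by transposing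
adjacent independent letters. -/
def TraceEquiv {E : Type} (I : E → E → Prop) : List E → List E → Prop :=
  Relation.EqvGen (TraceStep I)

/-- A step: a nonempty word of pairwise independent distinct letters written in
increasing order. -/
def IsStep {E : Type} [LT E] (I : E → E → Prop) (c : List E) : Prop :=
  c ≠ [] ∧ c.Pairwise (· < ·) ∧ c.Pairwise I

/-- The Foata conditions for a factorization into steps. -/
def IsFoata {E : Type} [LT E] (I : E → E → Prop) (L : List (List E)) : Prop :=
  (∀ c ∈ L, IsStep I c) ∧
  L.Chain' (fun c₁ c₂ => ∀ a ∈ c₂, ∃ b ∈ c₁, ¬ I a b)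

/-- A parallel process: a factorization into nonempty blocks of pairwise
independent letters. -/
def IsParProc {E : Type} (I : E → E → Prop) (M : List (List E)) : Prop :=
  ∀ c ∈ M, c ≠ [] ∧ c.Pairwise I

/-- Replace each letter `e` of a word by `τ e` copies of the corresponding
unit-time small instruction. -/
def expandWord {E : Type} (τ : E → ℕ) (w : List E) : List E :=
  (w.map fun e => List.replicate (τ e) e).flatten

/-!
Induction on the word, appending one letter at a time. If `F₁ ⋯ F_h` is a Foata normal form and
`F_k` is the last step containing a letter that does not commute with `a`, then `a` commutes
leftward past `F_{k+1} ⋯ F_h` and can be inserted into `F_{k+1}` (or form a new step if `k = h`);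
the Foata condition for the enlarged step is witnessed by that dependent letter of `F_k`.
-/

section FoataNormalForm

variable {E : Type} {I : E → E → Prop}

namespace TraceEquiv

theorem of_step {u v : List E} (h : TraceStep I u v) : TraceEquiv I u v :=
  Relation.EqvGen.rel _ _ h

theorem refl (u : List E) : TraceEquiv I u u :=
  Relation.EqvGen.refl u

theorem trans {u v w : List E} (h₁ : TraceEquiv I u v) (h₂ : TraceEquiv I v w) :
    TraceEquiv I u w :=
  Relation.EqvGen.trans _ _ _ h₁ h₂

theorem of_map {f : List E → List E} (hf : ∀ u v, TraceStep I u v → TraceStep I (f u) (f v))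
    {u v : List E} (h : TraceEquiv I u v) : TraceEquiv I (f u) (f v) := by
  induction h with
  | rel _ _ h => exact of_step (hf _ _ h)
  | refl _ => exact refl _
  | symm _ _ _ ih => exact Relation.EqvGen.symm _ _ ih
  | trans _ _ _ _ _ ih₁ ih₂ => exact ih₁.trans ih₂

theorem append_left {u v : List E} (x : List E) (h : TraceEquiv I u v) :
    TraceEquiv I (x ++ u) (x ++ v) :=
  of_map (f := (x ++ ·))
    (fun _ _ ⟨p, q, a, b, hab, h₁, h₂⟩ => ⟨x ++ p, q, a, b, hab, by simp [h₁], by simp [h₂]⟩) h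

theorem append_right {u v : List E} (y : List E) (h : TraceEquiv I u v) :
    TraceEquiv I (u ++ y) (v ++ y) :=
  of_map (f := (· ++ y))
    (fun _ _ ⟨p, q, a, b, hab, h₁, h₂⟩ => ⟨p, q ++ y, a, b, hab, by simp [h₁], by simp [h₂]⟩) h

theorem cons_append_singleton {a : E} {l : List E} (hl : ∀ b ∈ l, I a b) :
    TraceEquiv I (a :: l) (l ++ [a]) := by
  induction l with
  | nil => exact refl _
  | cons b l ih =>
    have hswap : TraceEquiv I (a :: b :: l) (b :: a :: l) :=
      of_step ⟨[], l, a, b, hl b List.mem_cons_self, rfl, rfl⟩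
    exact hswap.trans (append_left [b] (ih fun c hc => hl c (List.mem_cons_of_mem b hc)))

end TraceEquiv

variable [LinearOrder E]

theorem IsStep.orderedInsert (hsym : Symmetric I) {a : E} {c : List E} (haa : ¬ I a a)
    (hc : IsStep I c) (ha : ∀ b ∈ c, I a b) : IsStep I (c.orderedInsert (· ≤ ·) a) := by
  have hperm := c.perm_orderedInsert (· ≤ ·) a
  have hnodup : (c.orderedInsert (· ≤ ·) a).Nodup :=
    hperm.nodup_iff.2 (List.nodup_cons.2 ⟨fun h => haa (ha a h), hc.2.1.nodup⟩)
  refine ⟨List.ne_nil_of_mem (hperm.mem_iff.2 List.mem_cons_self), ?_, ?_⟩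
  · exact ((hc.2.1.imp le_of_lt).orderedInsert a c |>.and hnodup).imp
      fun h => lt_of_le_of_ne h.1 h.2
  · exact (hperm.pairwise_iff fun h => hsym h).2 (List.pairwise_cons.2 ⟨ha, hc.2.2⟩)

open Classical in
noncomputable def foataAppend (I : E → E → Prop) (a : E) : List (List E) → List (List E)
  | [] => [[a]]
  | c :: L =>
    if ∀ b ∈ (c :: L).flatten, I a b then c.orderedInsert (· ≤ ·) a :: L
    else c :: foataAppend I a L

theorem traceEquiv_foataAppend (a : E) (L : List (List E)) :
    TraceEquiv I (foataAppend I a L).flatten (L.flatten ++ [a]) := by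
  induction L with
  | nil => exact TraceEquiv.refl _
  | cons c L ih =>
    rw [foataAppend]
    split_ifs with hind
    · rw [List.orderedInsert_eq_take_drop]
      set p := c.takeWhile fun b => ¬a ≤ b
      set q := c.dropWhile fun b => ¬a ≤ b
      have hc : c = p ++ q := (List.takeWhile_append_dropWhile ..).symm
      have hmove : TraceEquiv I (a :: (q ++ L.flatten)) (q ++ L.flatten ++ [a]) :=
        TraceEquiv.cons_append_singleton fun b hb => hind b (by simp_all)
      simpa [hc] using hmove.append_left p
    · simpa using ih.append_left c

theorem head_foataAppend_dependent {a : E} {c : List E} {L : List (List E)}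
    (hcL : ∀ d ∈ L.head?, ∀ x ∈ d, ∃ b ∈ c, ¬ I x b)
    (hdep : ¬ ∀ b ∈ (c :: L).flatten, I a b) :
    ∀ d ∈ (foataAppend I a L).head?, ∀ x ∈ d, ∃ b ∈ c, ¬ I x b := by
  cases L with
  | nil => simpa [foataAppend] using hdep
  | cons d L =>
    rw [foataAppend]
    split_ifs with hind
    · simp only [List.head?_cons, Option.mem_some_iff, forall_eq', List.mem_orderedInsert]
      rintro x (rfl | hx)
      · push Not at hdep
        obtain ⟨b, hb, hab⟩ := hdep
        rcases List.mem_append.1 (List.flatten_cons ▸ hb) with hb | hb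
        · exact ⟨b, hb, hab⟩
        · exact absurd (hind b hb) hab
      · exact hcL d rfl x hx
    · exact hcL

theorem isFoata_foataAppend (hsym : Symmetric I) {a : E} (haa : ¬ I a a) {L : List (List E)}
    (hL : IsFoata I L) : IsFoata I (foataAppend I a L) := by
  induction L with
  | nil => exact ⟨by simp [foataAppend, IsStep], List.isChain_singleton _⟩
  | cons c L ih =>
    obtain ⟨hsteps, hchain : List.IsChain _ (c :: L)⟩ := hL
    rw [List.isChain_cons] at hchain
    rw [foataAppend]
    split_ifs with hind
    · refine ⟨?_, List.isChain_cons.2 ⟨?_, hchain.2⟩⟩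
      · simp only [List.mem_cons, forall_eq_or_imp]
        refine ⟨(hsteps c List.mem_cons_self).orderedInsert hsym haa
          fun b hb => hind b (by simp [hb]), fun d hd => hsteps d (List.mem_cons_of_mem c hd)⟩
      · intro d hd x hx
        obtain ⟨b, hb, hxb⟩ := hchain.1 d hd x hx
        exact ⟨b, (List.mem_orderedInsert _).2 (Or.inr hb), hxb⟩
    · obtain ⟨ihsteps, ihchain⟩ := ih ⟨fun d hd => hsteps d (List.mem_cons_of_mem c hd), hchain.2⟩
      refine ⟨?_, List.isChain_cons.2 ⟨head_foataAppend_dependent hchain.1 hind, ihchain⟩⟩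
      simp only [List.mem_cons, forall_eq_or_imp]
      exact ⟨hsteps c List.mem_cons_self, ihsteps⟩

end FoataNormalForm

theorem foata_exists_general
    {E : Type} [LinearOrder E]
    (I : E → E → Prop) (hirr : Irreflexive I) (hsym : Symmetric I)
    (w : List E) :
    ∃ L : List (List E), IsFoata I L ∧ TraceEquiv I L.flatten w := by
  induction w using List.reverseRecOn with
  | nil => exact ⟨[], ⟨by simp, List.isChain_nil⟩, TraceEquiv.refl _⟩
  | append_singleton w a ih =>
    obtain ⟨L, hL, hLw⟩ := ih
    exact ⟨foataAppend I a L, isFoata_foataAppend hsym (hirr a) hL,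
      (traceEquiv_foataAppend a L).trans (hLw.append_right [a])⟩

/-- every trace admits a Foata normal form. -/
theorem foata_exists
    {E : Type} [LinearOrder E] [Fintype E]
    (I : E → E → Prop) (hirr : Irreflexive I) (hsym : Symmetric I)
    (w : List E) :
    ∃ L : List (List E), IsFoata I L ∧ TraceEquiv I L.flatten w :=
  foata_exists_general I hirr hsym w
end

section
/- The Foata normal form of a trace is unique: if F₁…F_h = G₁…G_l in M(E,I) with both sides satisfying the Foata conditions, then h = l and F_k = G_k for all k. -/
section FoataInsertion

variable {E : Type} (I : E → E → Prop)

def IndepAll (a : E) (L : List (Multiset E)) : Prop :=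
  ∀ s ∈ L, ∀ b ∈ s, I a b

open Classical in
noncomputable def foataInsert (a : E) : List (Multiset E) → List (Multiset E)
  | [] => [{a}]
  | s :: L => if IndepAll I a (s :: L) then (a ::ₘ s) :: L else s :: foataInsert a L

noncomputable def foataInsertAll (w : List E) (L : List (Multiset E)) : List (Multiset E) :=
  w.foldl (fun L a => foataInsert I a L) L

noncomputable def foataNF (w : List E) : List (Multiset E) :=
  foataInsertAll I w []

variable {I}

@[simp]
lemma indepAll_nil (a : E) : IndepAll I a [] := by
  simp [IndepAll]

@[simp]
lemma indepAll_cons {a : E} {s : Multiset E} {L : List (Multiset E)} :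
    IndepAll I a (s :: L) ↔ (∀ b ∈ s, I a b) ∧ IndepAll I a L := by
  simp [IndepAll]

lemma not_indepAll_of_mem {a : E} {d : Multiset E} {L : List (Multiset E)}
    (hd : ∃ b ∈ d, ¬ I a b) (hdL : d ∈ L) : ¬ IndepAll I a L := fun h =>
  let ⟨b, hb, hab⟩ := hd
  hab (h d hdL b hb)

lemma foataInsert_nil (a : E) : foataInsert I a [] = [{a}] := by
  rw [foataInsert]

lemma foataInsert_cons_of_indepAll {a : E} {s : Multiset E} {L : List (Multiset E)}
    (h : IndepAll I a (s :: L)) : foataInsert I a (s :: L) = (a ::ₘ s) :: L := by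
  rw [foataInsert, if_pos h]

lemma foataInsert_cons_of_not_indepAll {a : E} {s : Multiset E} {L : List (Multiset E)}
    (h : ¬ IndepAll I a (s :: L)) : foataInsert I a (s :: L) = s :: foataInsert I a L := by
  rw [foataInsert, if_neg h]

lemma indepAll_foataInsert {a b : E} (hab : I a b) (L : List (Multiset E)) :
    IndepAll I a (foataInsert I b L) ↔ IndepAll I a L := by
  induction L with
  | nil => simp [foataInsert_nil, hab]
  | cons s L ih =>
    by_cases h : IndepAll I b (s :: L)
    · simp [foataInsert_cons_of_indepAll h, hab]
    · simp [foataInsert_cons_of_not_indepAll h, ih]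

lemma foataInsert_comm {a b : E} (hab : I a b) (hba : I b a) (L : List (Multiset E)) :
    foataInsert I a (foataInsert I b L) = foataInsert I b (foataInsert I a L) := by
  induction L with
  | nil =>
    rw [foataInsert_nil, foataInsert_nil, foataInsert_cons_of_indepAll (by simp [hab]),
      foataInsert_cons_of_indepAll (by simp [hba])]
    exact congrArg (· :: []) (Multiset.cons_swap a b 0)
  | cons s L ih =>
    have ha' := indepAll_foataInsert hab (s :: L)
    have hb' := indepAll_foataInsert hba (s :: L)
    by_cases hb : IndepAll I b (s :: L) <;> by_cases ha : IndepAll I a (s :: L) <;>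
      simp_all [-indepAll_cons, foataInsert_cons_of_indepAll, foataInsert_cons_of_not_indepAll,
        Multiset.cons_swap]

@[simp]
lemma foataInsertAll_cons (a : E) (w : List E) (L : List (Multiset E)) :
    foataInsertAll I (a :: w) L = foataInsertAll I w (foataInsert I a L) :=
  rfl

lemma foataNF_append (w v : List E) : foataNF I (w ++ v) = foataInsertAll I v (foataNF I w) :=
  List.foldl_append

lemma foataNF_eq_of_traceStep [Std.Symm I] {w₁ w₂ : List E} (h : TraceStep I w₁ w₂) :
    foataNF I w₁ = foataNF I w₂ := by
  obtain ⟨u, v, a, b, hab, rfl, rfl⟩ := h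
  simp [foataNF_append, foataInsert_comm hab (symm hab)]

lemma foataNF_eq_of_traceEquiv [Std.Symm I] {w₁ w₂ : List E} (h : TraceEquiv I w₁ w₂) :
    foataNF I w₁ = foataNF I w₂ :=
  (Setoid.ker (foataNF I)).iseqv.eqvGen_iff.1 (h.mono fun _ _ => foataNF_eq_of_traceStep)

lemma foataInsert_append_cons {a : E} {d : Multiset E} (hd : ∃ b ∈ d, ¬ I a b)
    (P M : List (Multiset E)) : foataInsert I a (P ++ d :: M) = P ++ d :: foataInsert I a M := by
  induction P with
  | nil => exact foataInsert_cons_of_not_indepAll (not_indepAll_of_mem hd (by simp))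
  | cons p P ih =>
    rw [List.cons_append, foataInsert_cons_of_not_indepAll (not_indepAll_of_mem hd (by simp)), ih,
      List.cons_append]

lemma foataInsertAll_append_cons {c : List E} {d : Multiset E} (hc : ∀ a ∈ c, ∃ b ∈ d, ¬ I a b)
    (P M : List (Multiset E)) :
    foataInsertAll I c (P ++ d :: M) = P ++ d :: foataInsertAll I c M := by
  induction c generalizing M with
  | nil => rfl
  | cons a c ih =>
    rw [foataInsertAll_cons, foataInsert_append_cons (hc a (by simp)),
      ih (fun x hx => hc x (by simp [hx]))]
    rfl

lemma foataInsertAll_singleton [Std.Symm I] {c : List E} (hc : c.Pairwise I) {s : Multiset E}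
    (hs : ∀ a ∈ c, ∀ b ∈ s, I a b) : foataInsertAll I c [s] = [s + c] := by
  induction c generalizing s with
  | nil => simp [foataInsertAll]
  | cons a c ih =>
    rw [List.pairwise_cons] at hc
    have hs' : ∀ x ∈ c, ∀ b ∈ a ::ₘ s, I x b := by
      intro x hx b hb
      rcases Multiset.mem_cons.1 hb with rfl | hb
      · exact symm (hc.1 x hx)
      · exact hs x (by simp [hx]) b hb
    rw [foataInsertAll_cons, foataInsert_cons_of_indepAll (by simpa using hs a (by simp)),
      ih hc.2 hs', ← Multiset.cons_coe, Multiset.add_cons, Multiset.cons_add]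

lemma foataInsertAll_nil [Std.Symm I] {c : List E} (hne : c ≠ []) (hc : c.Pairwise I) :
    foataInsertAll I c [] = [(c : Multiset E)] := by
  obtain ⟨a, c, rfl⟩ := List.exists_cons_of_ne_nil hne
  rw [List.pairwise_cons] at hc
  rw [foataInsertAll_cons, foataInsert_nil,
    foataInsertAll_singleton hc.2 (by simpa using fun x hx => symm (hc.1 x hx))]
  simp

lemma foataNF_flatten [LT E] [Std.Symm I] {L : List (List E)} (hL : IsFoata I L) :
    foataNF I L.flatten = L.map (↑) := by
  induction L using List.reverseRecOn with
  | nil => rfl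
  | append_singleton L c ih =>
    obtain ⟨hsteps, hchain⟩ := hL
    obtain ⟨hne, -, hc⟩ := hsteps c (by simp)
    have hL : IsFoata I L :=
      ⟨fun c hc => hsteps c (by simp [hc]), (List.isChain_append.1 hchain).1⟩
    rw [List.flatten_append, List.flatten_singleton, foataNF_append, ih hL, List.map_append,
      List.map_singleton]
    rcases L.eq_nil_or_concat with rfl | ⟨P, d, rfl⟩
    · exact foataInsertAll_nil hne hc
    · have hdep : ∀ a ∈ c, ∃ b ∈ (d : Multiset E), ¬ I a b := by
        simpa using (List.isChain_append.1 hchain).2.2 d (by simp) c (by simp)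
      simp only [List.concat_eq_append, List.map_append, List.map_singleton, List.append_assoc,
        List.singleton_append]
      rw [foataInsertAll_append_cons hdep, foataInsertAll_nil hne hc]

end FoataInsertion

lemma List.map_sort_map_coe {E : Type} [LinearOrder E] {L : List (List E)}
    (hL : ∀ c ∈ L, c.Pairwise (· ≤ ·)) :
    (L.map ((↑) : List E → Multiset E)).map (Multiset.sort · (· ≤ ·)) = L := by
  rw [List.map_map]
  conv_rhs => rw [← List.map_id L]
  refine List.map_congr_left fun c hc => ?_
  simpa [Multiset.coe_sort] using List.mergeSort_of_pairwise (by simpa using hL c hc)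

theorem foata_unique_general
    {E : Type} [LinearOrder E]
    (I : E → E → Prop) (hsym : Symmetric I)
    (L L' : List (List E)) (hL : IsFoata I L) (hL' : IsFoata I L')
    (h : TraceEquiv I L.flatten L'.flatten) : L = L' := by
  have : Std.Symm I := ⟨hsym⟩
  have hNF : L.map (↑) = L'.map ((↑) : List E → Multiset E) := by
    rw [← foataNF_flatten hL, ← foataNF_flatten hL', foataNF_eq_of_traceEquiv h]
  rw [← List.map_sort_map_coe fun c hc => (hL.1 c hc).2.1.imp le_of_lt, hNF,
    List.map_sort_map_coe fun c hc => (hL'.1 c hc).2.1.imp le_of_lt]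

/-- the Foata normal form of a trace is unique. -/
theorem foata_unique
    {E : Type} [LinearOrder E] [Fintype E]
    (I : E → E → Prop) (hirr : Irreflexive I) (hsym : Symmetric I)
    (L L' : List (List E)) (hL : IsFoata I L) (hL' : IsFoata I L')
    (h : TraceEquiv I L.flatten L'.flatten) : L = L' :=
  foata_unique_general I hsym L L' hL hL' h
end

section
/- The height of the Foata normal form of a trace μ equals the minimum number of steps over all factorizations of μ into steps, where a step is a trace of pairwise-independent letters. Equivalently, the Foata normal form realizes a parallel process of minimum length among all parallel processes realizing μ. -/
open Finset Classical

noncomputable def heightUpdate {E : Type} [Fintype E] (I : E → E → Prop) (h : E → ℕ)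
    (a : E) : E → ℕ :=
  Function.update h a ((univ.filter fun c => ¬ I c a).sup h + 1)

section

variable {E : Type} [Fintype E] {I : E → E → Prop}

theorem heightUpdate_self (h : E → ℕ) (a : E) :
    heightUpdate I h a a = (univ.filter fun c => ¬ I c a).sup h + 1 :=
  Function.update_self ..

theorem heightUpdate_of_ne (h : E → ℕ) {a b : E} (hb : b ≠ a) : heightUpdate I h a b = h b :=
  Function.update_of_ne hb ..

theorem le_heightUpdate (hirr : ∀ a, ¬ I a a) (h : E → ℕ) (a : E) :
    h ≤ heightUpdate I h a := by
  intro b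
  rcases eq_or_ne b a with rfl | hb
  · rw [heightUpdate_self]
    exact Nat.le_succ_of_le (le_sup (by simpa using hirr b))
  · rw [heightUpdate_of_ne h hb]

theorem le_foldl_heightUpdate (hirr : ∀ a, ¬ I a a) (w : List E) (h : E → ℕ) :
    h ≤ w.foldl (heightUpdate I) h := by
  induction w generalizing h with
  | nil => exact le_rfl
  | cons a w ih => exact (le_heightUpdate hirr h a).trans (ih _)

theorem heightUpdate_comm {a b : E} (hab : I a b) (hba : I b a) (h : E → ℕ) :
    heightUpdate I (heightUpdate I h a) b = heightUpdate I (heightUpdate I h b) a := by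
  rcases eq_or_ne a b with rfl | hne
  · rfl
  have sup_eq : ∀ {x y : E}, I x y → x ≠ y →
      (univ.filter fun c => ¬ I c y).sup (heightUpdate I h x) =
        (univ.filter fun c => ¬ I c y).sup h := fun hxy hne =>
    sup_congr rfl fun c hc => heightUpdate_of_ne h (by rintro rfl; simp_all)
  simp only [heightUpdate] at sup_eq ⊢
  rw [sup_eq hab hne, sup_eq hba hne.symm]
  exact Function.update_comm hne ..

theorem TraceEquiv.foldl_heightUpdate_eq (hsym : ∀ ⦃a b⦄, I a b → I b a)
    {w₁ w₂ : List E} (he : TraceEquiv I w₁ w₂) (h : E → ℕ) :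
    w₁.foldl (heightUpdate I) h = w₂.foldl (heightUpdate I) h := by
  induction he with
  | rel _ _ hs =>
    obtain ⟨u, v, a, b, hab, rfl, rfl⟩ := hs
    simp [heightUpdate_comm hab (hsym hab)]
  | refl => rfl
  | symm _ _ _ ih => exact ih.symm
  | trans _ _ _ _ _ ih₁ ih₂ => exact ih₁.trans ih₂

theorem foldl_heightUpdate_apply_of_pairwise {c : List E} (hc : c.Pairwise I) (h : E → ℕ)
    (b : E) :
    c.foldl (heightUpdate I) h b =
      if b ∈ c then (univ.filter fun x => ¬ I x b).sup h + 1 else h b := by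
  induction c generalizing h with
  | nil => simp
  | cons d c ih =>
    obtain ⟨hd, hc⟩ := List.pairwise_cons.mp hc
    rw [List.foldl_cons, ih hc]
    by_cases hb : b ∈ c
    · rw [if_pos hb, if_pos (List.mem_cons_of_mem _ hb)]
      congr 1
      exact sup_congr rfl fun x hx => heightUpdate_of_ne h (by rintro rfl; simp_all)
    · rcases eq_or_ne b d with rfl | hbd
      · simp [hb, heightUpdate_self]
      · simp [hb, hbd, heightUpdate_of_ne h hbd]

theorem foldl_heightUpdate_le_of_pairwise {c : List E} (hc : c.Pairwise I) (h : E → ℕ)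
    (b : E) :
    c.foldl (heightUpdate I) h b ≤ univ.sup h + 1 := by
  rw [foldl_heightUpdate_apply_of_pairwise hc]
  split_ifs
  · exact Nat.succ_le_succ (sup_mono (filter_subset _ _))
  · exact Nat.le_succ_of_le (le_sup (mem_univ b))

theorem foldl_flatten_heightUpdate_le {M : List (List E)} (hM : ∀ c ∈ M, c.Pairwise I)
    (h : E → ℕ) (b : E) :
    M.flatten.foldl (heightUpdate I) h b ≤ univ.sup h + M.length := by
  induction M generalizing h with
  | nil => simpa using le_sup (mem_univ b)
  | cons c M ih =>
    rw [List.flatten_cons, List.foldl_append, List.length_cons, ← add_assoc, add_right_comm]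
    refine (ih (fun d hd => hM d (List.mem_cons_of_mem _ hd)) _).trans ?_
    gcongr
    exact Finset.sup_le fun b _ =>
      foldl_heightUpdate_le_of_pairwise (hM c List.mem_cons_self) h b

theorem lt_foldl_heightUpdate_of_mem (hirr : ∀ a, ¬ I a a) {c : List E} {a b : E} (ha : a ∈ c)
    (hba : ¬ I b a) (h : E → ℕ) : h b < c.foldl (heightUpdate I) h a := by
  obtain ⟨u, v, rfl⟩ := List.append_of_mem ha
  rw [List.foldl_append, List.foldl_cons]
  calc h b ≤ u.foldl (heightUpdate I) h b := le_foldl_heightUpdate hirr u h b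
    _ < heightUpdate I (u.foldl (heightUpdate I) h) a a := by
      rw [heightUpdate_self]
      exact Nat.lt_succ_of_le (le_sup (by simpa using hba))
    _ ≤ _ := le_foldl_heightUpdate hirr v _ a

theorem length_le_foldl_flatten_heightUpdate (hirr : ∀ a, ¬ I a a)
    (hsym : ∀ ⦃a b⦄, I a b → I b a)
    {L : List (List E)} (hL : L.IsChain fun c₁ c₂ => ∀ a ∈ c₂, ∃ b ∈ c₁, ¬ I a b)
    (h : E → ℕ) :
    ∀ c ∈ L.getLast?, ∀ a ∈ c, L.length ≤ L.flatten.foldl (heightUpdate I) h a := by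
  induction L using List.reverseRecOn with
  | nil => simp
  | append_singleton L c ih =>
    intro c' hc' a ha
    obtain rfl : c' = c := by simpa using hc'.symm
    obtain ⟨hL, -, hLc⟩ := List.isChain_append.mp hL
    rw [List.flatten_append, List.foldl_append, List.flatten_singleton, List.length_append,
      List.length_singleton, Nat.add_one_le_iff]
    cases hlast : L.getLast? with
    | none =>
      rw [List.getLast?_eq_none_iff.mp hlast]
      exact (Nat.zero_le _).trans_lt (lt_foldl_heightUpdate_of_mem hirr ha (hirr a) _)
    | some d =>
      obtain ⟨b, hb, hab⟩ := hLc d hlast _ rfl a ha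
      exact (ih hL d hlast b hb).trans_lt
        (lt_foldl_heightUpdate_of_mem hirr ha (fun h => hab (hsym h)) _)

end

/-- the height of the Foata normal form of a trace is the minimum
number of steps over all factorizations of the trace into steps (parallel
processes realizing it). -/
theorem foata_height_is_min
    {E : Type} [LinearOrder E] [Fintype E]
    (I : E → E → Prop) (hirr : Irreflexive I) (hsym : Symmetric I)
    (L : List (List E)) (hL : IsFoata I L) :
    IsLeast {m : ℕ | ∃ M : List (List E), IsParProc I M ∧
      TraceEquiv I M.flatten L.flatten ∧ M.length = m} L.length := by
  refine ⟨⟨L, fun c hc => ⟨(hL.1 c hc).1, (hL.1 c hc).2.2⟩, .refl _, rfl⟩, ?_⟩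
  rintro _ ⟨M, hM, hML, rfl⟩
  cases hlast : L.getLast? with
  | none => simp [List.getLast?_eq_none_iff.mp hlast]
  | some c =>
    obtain ⟨a, ha⟩ := List.exists_mem_of_ne_nil c (hL.1 c (List.mem_of_getLast? hlast)).1
    calc L.length ≤ L.flatten.foldl (heightUpdate I) 0 a :=
          length_le_foldl_flatten_heightUpdate hirr hsym hL.2 0 c hlast a ha
      _ = M.flatten.foldl (heightUpdate I) 0 a := by
          rw [hML.foldl_heightUpdate_eq hsym]
      _ ≤ univ.sup 0 + M.length :=
          foldl_flatten_heightUpdate_le (fun c hc => (hM c hc).2) 0 a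
      _ = M.length := by simp
end
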